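/- For every ν ∈ (0,1) and every Θ ∈ (0,∞), the series Σ_{n=1}^∞ (-1)^{n-1} Θ^{-νn-1} (Γ(nν+1)/n!) sin(nπν) is absolutely convergent (the sequence of its terms is summable), so that ψ_ν(Θ) is well defined. -/

import Mathlib

/-- The `n`-th term (for original index `n+1 ≥ 1`) of the series defining the
Wright-type function `ψ_ν`: `(-1)^{n-1} Θ^{-νn-1} (Γ(nν+1)/n!) sin(nπν)`. -/
noncomputable def wrightTerm (ν Θ : ℝ) (n : ℕ) : ℝ :=
  (-1 : ℝ) ^ n * Θ ^ (-(ν * (n + 1 : ℝ)) - 1) *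
    (Real.Gamma ((n + 1 : ℝ) * ν + 1) / (Nat.factorial (n + 1) : ℝ)) *
    Real.sin ((n + 1 : ℝ) * Real.pi * ν)

/-!
Log-convexity of `Γ` (in Hölder form, between the points `m + 1` and `1`) gives
`Γ(νm + 1) ≤ Γ(m + 1)^ν = (m!)^ν`, so the `m`-th term is at most `Θ⁻¹ (Θ^{-ν})^m / (m!)^{1-ν}`.
These majorants are summable by the ratio test: consecutive ratios are `Θ^{-ν} / (m+1)^{1-ν} → 0`.
-/

open Real Filter Topology Nat

theorem Real.Gamma_mul_add_one_le_rpow {ν x : ℝ} (hν₀ : 0 < ν) (hν₁ : ν < 1) (hx : -1 < x) :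
    Gamma (ν * x + 1) ≤ Gamma (x + 1) ^ ν := by
  have h := Gamma_mul_add_mul_le_rpow_Gamma_mul_rpow_Gamma (s := x + 1) (t := 1)
    (by linarith) one_pos hν₀ (sub_pos.2 hν₁) (add_sub_cancel ν 1)
  calc Gamma (ν * x + 1) = Gamma (ν * (x + 1) + (1 - ν) * 1) := by ring_nf
    _ ≤ Gamma (x + 1) ^ ν * Gamma 1 ^ (1 - ν) := h
    _ = Gamma (x + 1) ^ ν := by rw [Gamma_one, one_rpow, mul_one]

theorem summable_pow_div_factorial_rpow (c : ℝ) {s : ℝ} (hs : 0 < s) :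
    Summable fun n : ℕ ↦ c ^ n / (n ! : ℝ) ^ s := by
  have hratio : Tendsto (fun n : ℕ ↦ |c| / ((n + 1 : ℕ) : ℝ) ^ s) atTop (𝓝 0) :=
    (tendsto_add_atTop_iff_nat 1).2 <| tendsto_const_nhds.div_atTop <|
      (tendsto_rpow_atTop hs).comp tendsto_natCast_atTop_atTop
  refine summable_of_ratio_norm_eventually_le (r := 1 / 2) (by norm_num) ?_
  filter_upwards [hratio.eventually_le_const (by norm_num : (0 : ℝ) < 1 / 2)] with n hn
  have hfac : ((n + 1)! : ℝ) ^ s = ((n + 1 : ℕ) : ℝ) ^ s * (n ! : ℝ) ^ s := by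
    rw [factorial_succ, cast_mul, mul_rpow (by positivity) (by positivity)]
  calc ‖c ^ (n + 1) / ((n + 1)! : ℝ) ^ s‖
      = |c| / ((n + 1 : ℕ) : ℝ) ^ s * ‖c ^ n / (n ! : ℝ) ^ s‖ := by
        simp only [hfac, pow_succ, norm_div, norm_mul, norm_pow, Real.norm_eq_abs,
          abs_rpow_of_nonneg (Nat.cast_nonneg _), Nat.abs_cast]
        ring
    _ ≤ 1 / 2 * ‖c ^ n / (n ! : ℝ) ^ s‖ := by gcongr

theorem abs_wrightTerm_le {ν Θ : ℝ} (hν₀ : 0 < ν) (hν₁ : ν < 1) (hΘ : 0 < Θ) (n : ℕ) :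
    |wrightTerm ν Θ n| ≤ Θ⁻¹ * ((Θ ^ (-ν)) ^ (n + 1) / ((n + 1)! : ℝ) ^ (1 - ν)) := by
  have hfac : (0 : ℝ) < (n + 1)! := by positivity
  have hΓ : Gamma ((n + 1 : ℝ) * ν + 1) ≤ ((n + 1)! : ℝ) ^ ν := by
    have := Gamma_mul_add_one_le_rpow hν₀ hν₁ (x := (n + 1 : ℕ))
      (neg_one_lt_zero.trans_le (Nat.cast_nonneg _))
    rwa [Gamma_nat_eq_factorial, mul_comm, cast_succ] at this
  have hpow : Θ ^ (-(ν * (n + 1 : ℝ)) - 1) = Θ⁻¹ * (Θ ^ (-ν)) ^ (n + 1) := by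
    rw [rpow_sub hΘ, rpow_one, ← rpow_mul_natCast hΘ.le, cast_succ, neg_mul, div_eq_inv_mul]
  have hratio : ((n + 1)! : ℝ) ^ ν / (n + 1)! = 1 / ((n + 1)! : ℝ) ^ (1 - ν) := by
    rw [rpow_sub hfac, rpow_one, one_div_div]
  unfold wrightTerm
  rw [abs_mul, abs_mul, abs_mul, abs_pow, abs_neg, abs_one, one_pow, one_mul, hpow,
    abs_of_pos (by positivity), abs_of_pos (div_pos (Gamma_pos_of_pos (by positivity)) hfac)]
  calc Θ⁻¹ * (Θ ^ (-ν)) ^ (n + 1) * (Gamma ((n + 1 : ℝ) * ν + 1) / (n + 1)!) *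
        |sin ((n + 1 : ℝ) * π * ν)|
      ≤ Θ⁻¹ * (Θ ^ (-ν)) ^ (n + 1) * (((n + 1)! : ℝ) ^ ν / (n + 1)!) * 1 := by
        gcongr
        exact abs_sin_le_one _
    _ = Θ⁻¹ * ((Θ ^ (-ν)) ^ (n + 1) / ((n + 1)! : ℝ) ^ (1 - ν)) := by
        rw [hratio]; ring

/-- For every `ν ∈ (0,1)` and every `Θ ∈ (0,∞)`, the series defining `ψ_ν(Θ)`
is absolutely convergent (its terms form a summable family), so `ψ_ν` is well defined. -/
theorem wrightTerm_summable (ν : ℝ) (hν : ν ∈ Set.Ioo (0 : ℝ) 1)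
    (Θ : ℝ) (hΘ : Θ ∈ Set.Ioi (0 : ℝ)) :
    Summable (wrightTerm ν Θ) := by
  have hbound := (summable_nat_add_iff 1).2 <|
    summable_pow_div_factorial_rpow (Θ ^ (-ν)) (sub_pos.2 hν.2)
  exact (hbound.mul_left Θ⁻¹).of_norm_bounded (abs_wrightTerm_le hν.1 hν.2 hΘ)
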